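/- Let k be an ordered field, I a linearly ordered set, Γ := H[I,k], let (Γ, ψ) be an H-couple over k of Hahn type, and let f ↦ f' be the derivation on K := k((t^Γ)) determined by (t^α)' := −∑_{i ∈ supp α} α_i t^{α + ψ(e_i)} and strong additivity. Order K by f > 0 iff the leading coefficient f_{vf} is positive in k. Then K with this derivation is an H-field whose constant field is k (the constant series c·t⁰, c ∈ k), whose valuation ring is the convex hull of k in K, and whose asymptotic couple is (Γ, ψ): for the valuation f ↦ v f := min supp f one has v(f'/f) = ψ(v f) for all nonzero f ∈ K with v f ≠ 0. -/

import Mathlib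

variable {I k : Type*} [LinearOrder I] [Field k] [LinearOrder k] [IsStrictOrderedRing k]

/-- The leading (i.e. earliest-index) coefficient of a Hahn series in the Hahn product
`H[I,k] = HahnSeries I k`; it is `0` for the zero series. -/
noncomputable def leadCoeff (γ : HahnSeries I k) : k :=
  letI := Classical.propDecidable (γ = 0)
  if h : γ = 0 then 0
  else γ.coeff (γ.isWF_support.min (HahnSeries.support_nonempty_iff.mpr h))

lemma leadCoeff_zero : leadCoeff (0 : HahnSeries I k) = 0 := by
  simp [leadCoeff]

lemma leadCoeff_eq {γ : HahnSeries I k} {m : I} (hm : γ.coeff m ≠ 0)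
    (hmin : ∀ j, γ.coeff j ≠ 0 → m ≤ j) : leadCoeff γ = γ.coeff m := by
  have h0 : γ ≠ 0 := by
    intro h; subst h; simp at hm
  rw [leadCoeff, dif_neg h0]
  have h1 : m ∈ γ.support := (HahnSeries.mem_support γ m).2 hm
  have h2 := γ.isWF_support.min_mem (HahnSeries.support_nonempty_iff.mpr h0)
  have h3 : m ≤ γ.isWF_support.min (HahnSeries.support_nonempty_iff.mpr h0) :=
    hmin _ ((HahnSeries.mem_support γ _).1 h2)
  have h4 : ¬ m < γ.isWF_support.min (HahnSeries.support_nonempty_iff.mpr h0) :=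
    γ.isWF_support.not_lt_min _ h1
  have : m = γ.isWF_support.min (HahnSeries.support_nonempty_iff.mpr h0) :=
    le_antisymm h3 (not_lt.mp h4)
  rw [← this]

lemma leadCoeff_ne_zero {γ : HahnSeries I k} (h : γ ≠ 0) : leadCoeff γ ≠ 0 := by
  rw [leadCoeff, dif_neg h]
  exact (HahnSeries.mem_support γ _).1 (γ.isWF_support.min_mem _)

lemma leadCoeff_spec {γ : HahnSeries I k} (h : γ ≠ 0) :
    ∃ m : I, γ.coeff m = leadCoeff γ ∧ γ.coeff m ≠ 0 ∧ ∀ j, γ.coeff j ≠ 0 → m ≤ j := by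
  refine ⟨γ.isWF_support.min (HahnSeries.support_nonempty_iff.mpr h), ?_, ?_, ?_⟩
  · rw [leadCoeff, dif_neg h]
  · exact (HahnSeries.mem_support γ _).1 (γ.isWF_support.min_mem _)
  · intro j hj
    exact not_lt.mp (γ.isWF_support.not_lt_min _ ((HahnSeries.mem_support γ j).2 hj))

lemma leadCoeff_neg (γ : HahnSeries I k) : leadCoeff (-γ) = -leadCoeff γ := by
  by_cases h : γ = 0
  · subst h; simp [leadCoeff_zero]
  · obtain ⟨m, hm, hne, hmin⟩ := leadCoeff_spec h
    have : leadCoeff (-γ) = (-γ).coeff m := by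
      refine leadCoeff_eq ?_ ?_
      · simpa [HahnSeries.coeff_neg] using hne
      · intro j hj
        exact hmin j (by simpa [HahnSeries.coeff_neg] using hj)
    rw [this, HahnSeries.coeff_neg, hm]

lemma leadCoeff_add_pos {x y : HahnSeries I k} (hx : 0 < leadCoeff x) (hy : 0 < leadCoeff y) :
    0 < leadCoeff (x + y) := by
  have hx0 : x ≠ 0 := by rintro rfl; simp [leadCoeff_zero] at hx
  have hy0 : y ≠ 0 := by rintro rfl; simp [leadCoeff_zero] at hy
  obtain ⟨mx, hmx, hmxne, hminx⟩ := leadCoeff_spec hx0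
  obtain ⟨my, hmy, hmyne, hminy⟩ := leadCoeff_spec hy0
  rcases lt_trichotomy mx my with hlt | heq | hgt
  · have : leadCoeff (x + y) = (x + y).coeff mx := by
      refine leadCoeff_eq ?_ ?_
      · have : y.coeff mx = 0 := by
          by_contra hc
          exact absurd (hminy mx hc) (not_le.mpr hlt)
        simp [HahnSeries.coeff_add, this, hmxne]
      · intro j hj
        rw [HahnSeries.coeff_add] at hj
        rcases ne_or_eq (x.coeff j) 0 with h | h
        · exact hminx j h
        · have : y.coeff j ≠ 0 := by
            intro h'; rw [h, h'] at hj; simp at hj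
          exact le_trans hlt.le (hminy j this)
    rw [this, HahnSeries.coeff_add]
    have : y.coeff mx = 0 := by
      by_contra hc
      exact absurd (hminy mx hc) (not_le.mpr hlt)
    rw [this, add_zero, hmx]; exact hx
  · subst heq
    have hsum : (x + y).coeff mx = leadCoeff x + leadCoeff y := by
      rw [HahnSeries.coeff_add, hmx, hmy]
    have : leadCoeff (x + y) = (x + y).coeff mx := by
      refine leadCoeff_eq ?_ ?_
      · rw [hsum]; positivity
      · intro j hj
        rw [HahnSeries.coeff_add] at hj
        rcases ne_or_eq (x.coeff j) 0 with h | h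
        · exact hminx j h
        · have : y.coeff j ≠ 0 := by
            intro h'; rw [h, h'] at hj; simp at hj
          exact hminy j this
    rw [this, hsum]; positivity
  · have : leadCoeff (x + y) = (x + y).coeff my := by
      refine leadCoeff_eq ?_ ?_
      · have : x.coeff my = 0 := by
          by_contra hc
          exact absurd (hminx my hc) (not_le.mpr hgt)
        simp [HahnSeries.coeff_add, this, hmyne]
      · intro j hj
        rw [HahnSeries.coeff_add] at hj
        rcases ne_or_eq (y.coeff j) 0 with h | h
        · exact hminy j h
        · have : x.coeff j ≠ 0 := by
            intro h'; rw [h'] at hj; simp [h] at hj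
          exact le_trans hgt.le (hminx j this)
    rw [this, HahnSeries.coeff_add]
    have : x.coeff my = 0 := by
      by_contra hc
      exact absurd (hminx my hc) (not_le.mpr hgt)
    rw [this, zero_add, hmy]; exact hy

/-- The Hahn product ordering on `H[I,k] = HahnSeries I k`:  `γ ≤ δ` iff `γ = δ` or the leading
coefficient of `δ - γ` is positive; so `γ > 0` iff `γ_{i₀} > 0` where `i₀ = min supp γ`. -/
noncomputable instance hahnLinearOrderedAddCommGroup :
    LinearOrder (HahnSeries I k) :=
  { le := fun γ δ => γ = δ ∨ 0 < leadCoeff (δ - γ)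
    le_refl := fun a => Or.inl rfl
    le_trans := by
      rintro a b c (rfl | hab) (h | hbc)
      · exact Or.inl h
      · exact Or.inr hbc
      · exact Or.inr (h ▸ hab)
      · right
        have := leadCoeff_add_pos hbc hab
        rwa [sub_add_sub_cancel] at this
    le_antisymm := by
      rintro a b (rfl | hab) (h | hba)
      · rfl
      · rfl
      · exact h.symm
      · exfalso
        have : a - b = -(b - a) := by abel
        rw [this, leadCoeff_neg] at hba
        linarith
    le_total := by
      intro a b
      by_cases h : a = b
      · exact Or.inl (Or.inl h)
      · have hne : b - a ≠ 0 := fun hc => h (by linear_combination (norm := abel) -hc)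
        rcases (leadCoeff_ne_zero hne).lt_or_gt with hlt | hgt
        · right; right
          have : a - b = -(b - a) := by abel
          rw [this, leadCoeff_neg]
          linarith
        · exact Or.inl (Or.inr hgt)
    toDecidableLE := Classical.decRel _ }

instance hahnIsOrderedAddMonoid : IsOrderedAddMonoid (HahnSeries I k) where
    add_le_add_left := by
      rintro a b (rfl | hab) c
      · exact Or.inl rfl
      · right
        have : b + c - (a + c) = b - a := by abel
        rwa [this]

/-- `(H[I,k], ψ)` is an *H-couple over `k` of Hahn type*. -/
structure IsHCoupleHahnType (ψ : HahnSeries I k → HahnSeries I k) : Prop where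
  A1 : ∀ α β : HahnSeries I k, α ≠ 0 → β ≠ 0 → α + β ≠ 0 → min (ψ α) (ψ β) ≤ ψ (α + β)
  A2 : ∀ (α : HahnSeries I k) (n : ℤ), α ≠ 0 → n ≠ 0 → ψ (n • α) = ψ α
  A3 : ∀ α β : HahnSeries I k, β ≠ 0 → 0 < α → ψ β < α + ψ α
  smul_eq : ∀ (α : HahnSeries I k) (c : k), α ≠ 0 → c ≠ 0 → ψ (c • α) = ψ α
  mono : ∀ α β : HahnSeries I k, 0 < α → α ≤ β → ψ β ≤ ψ α
  hahnType : ∀ α β : HahnSeries I k, α ≠ 0 → β ≠ 0 → ψ α = ψ β →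
    ∃ c : k, c ≠ 0 ∧ (α - c • β = 0 ∨ ψ α < ψ (α - c • β))

/-- The `γ`-coefficient of the formal derivative
`(t^α)' = -∑_{i ∈ supp α} α_i t^{α + ψ(e_i)}` of the monomial `t^α` in the Hahn field
`K = k((t^Γ))`, `Γ = H[I,k]`. -/
noncomputable def tderivCoeff (ψ : HahnSeries I k → HahnSeries I k)
    (α γ : HahnSeries I k) : k :=
  -∑ᶠ i ∈ {i : I | i ∈ α.support ∧ α + ψ (HahnSeries.single i 1) = γ}, α.coeff i

/-- `H` together with the linear order and the map `d` is an *H-field*:  `H` is a linearly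
ordered field, `d` is a derivation on `H`, and, writing `C = {h | d h = 0}` for the constant
field, (H1) `d h > 0` whenever `h > C`, and (H2) `𝒪 = C + 𝔬` where
`𝒪 = {h | |h| ≤ c for some c ∈ C}` and `𝔬 = {h | |h| < c for all 0 < c ∈ C}`. -/
structure IsHField (H : Type*) [Field H] [LinearOrder H] (d : H → H) : Prop where
  add_le_add_left : ∀ a b : H, a ≤ b → ∀ c : H, c + a ≤ c + b
  mul_pos : ∀ a b : H, 0 < a → 0 < b → 0 < a * b
  map_add : ∀ x y, d (x + y) = d x + d y
  leibniz : ∀ x y, d (x * y) = x * d y + y * d x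
  h1 : ∀ h : H, (∀ c : H, d c = 0 → c < h) → 0 < d h
  h2 : ∀ x : H, (∃ c, d c = 0 ∧ |x| ≤ c) ↔
    ∃ c e : H, d c = 0 ∧ (∀ c' : H, d c' = 0 → 0 < c' → |e| < c') ∧ x = c + e

lemma hs_le_iff {a b : HahnSeries I k} : a ≤ b ↔ (a = b ∨ 0 < leadCoeff (b - a)) := Iff.rfl

lemma hs_lt_iff {a b : HahnSeries I k} : a < b ↔ 0 < leadCoeff (b - a) := by
  constructor
  · intro h
    rcases hs_le_iff.mp h.le with h' | h'
    · exact absurd h' h.ne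
    · exact h'
  · intro h
    have hne : a ≠ b := by
      intro he; subst he; simp [sub_self, leadCoeff_zero] at h
    exact lt_of_le_of_ne (hs_le_iff.mpr (Or.inr h)) hne

lemma hs_pos_iff {a : HahnSeries I k} : 0 < a ↔ 0 < leadCoeff a := by
  simpa using hs_lt_iff (a := 0) (b := a)

noncomputable def leadIdx (a : HahnSeries I k) (h : a ≠ 0) : I :=
  a.isWF_support.min (HahnSeries.support_nonempty_iff.mpr h)

lemma leadIdx_coeff {a : HahnSeries I k} (h : a ≠ 0) : a.coeff (leadIdx a h) = leadCoeff a := by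
  rw [leadCoeff, dif_neg h]; rfl

lemma leadIdx_coeff_ne {a : HahnSeries I k} (h : a ≠ 0) : a.coeff (leadIdx a h) ≠ 0 :=
  (HahnSeries.mem_support a _).1 (a.isWF_support.min_mem _)

lemma leadIdx_le {a : HahnSeries I k} (h : a ≠ 0) {j : I} (hj : a.coeff j ≠ 0) :
    leadIdx a h ≤ j :=
  not_lt.mp (a.isWF_support.not_lt_min _ ((HahnSeries.mem_support a j).2 hj))

lemma leadIdx_eq {a : HahnSeries I k} (h : a ≠ 0) {m : I} (hm : a.coeff m ≠ 0)
    (hmin : ∀ j, a.coeff j ≠ 0 → m ≤ j) : leadIdx a h = m :=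
  le_antisymm (leadIdx_le h hm) (hmin _ (leadIdx_coeff_ne h))

lemma hs_pos_of_coeff {a : HahnSeries I k} {m : I} (hm : 0 < a.coeff m)
    (hmin : ∀ j, a.coeff j ≠ 0 → m ≤ j) : 0 < a := by
  rw [hs_pos_iff, leadCoeff_eq (ne_of_gt hm) hmin]; exact hm

lemma leadIdx_pos_coeff {a : HahnSeries I k} (h : 0 < a) : 0 < leadCoeff a :=
  hs_pos_iff.mp h

/-- supports of positive elements lie above the lead index. -/
lemma supp_subset_of_lt_single {a : HahnSeries I k} {j : I} {c : k}
    (h0 : 0 ≤ a) (h1 : a < HahnSeries.single j c) {j' : I} (hj' : a.coeff j' ≠ 0) : j ≤ j' := by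
  rcases eq_or_lt_of_le h0 with rfl | h0
  · simp at hj'
  have ha : a ≠ 0 := (ne_of_gt h0)
  by_contra hlt
  push_neg at hlt
  -- leadIdx a ≤ j' < j ; then single j c - a has negative lead coeff
  have hla : leadIdx a ha ≤ j' := leadIdx_le ha hj'
  have hlc : 0 < leadCoeff a := leadIdx_pos_coeff h0
  have hcoeff : (HahnSeries.single j c - a).coeff (leadIdx a ha) = - leadCoeff a := by
    rw [HahnSeries.coeff_sub, HahnSeries.coeff_single_of_ne, leadIdx_coeff, zero_sub]
    exact fun he => absurd (((le_of_eq he.symm).trans hla).trans_lt hlt) (lt_irrefl j)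
  have hmin : ∀ j'', (HahnSeries.single j c - a).coeff j'' ≠ 0 → leadIdx a ha ≤ j'' := by
    intro j'' hne
    rw [HahnSeries.coeff_sub, HahnSeries.coeff_single] at hne
    by_cases hc : j'' = j
    · exact le_trans (hla.trans hlt.le) (le_of_eq hc.symm)
    · rw [if_neg hc, zero_sub, neg_ne_zero] at hne
      exact leadIdx_le ha hne
  have := hs_lt_iff.mp h1
  rw [leadCoeff_eq (by rw [hcoeff]; exact neg_ne_zero.mpr (ne_of_gt hlc)) hmin, hcoeff] at this
  linarith

lemma leadCoeff_smul {c : k} {a : HahnSeries I k} : leadCoeff (c • a) = c * leadCoeff a := by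
  by_cases hc : c = 0
  · simp [hc, leadCoeff_zero]
  by_cases ha : a = 0
  · simp [ha, leadCoeff_zero]
  have h1 : (c • a).coeff (leadIdx a ha) = c * leadCoeff a := by
    rw [HahnSeries.coeff_smul, leadIdx_coeff]; rfl
  refine leadCoeff_eq (h1 ▸ mul_ne_zero hc (leadCoeff_ne_zero ha)) ?_ |>.trans h1
  intro j hj
  rw [HahnSeries.coeff_smul, smul_eq_mul] at hj
  exact leadIdx_le ha fun he => hj (by rw [he, mul_zero])

lemma hs_smul_pos {c : k} {a : HahnSeries I k} (hc : 0 < c) (ha : 0 < a) : 0 < c • a := by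
  rw [hs_pos_iff, leadCoeff_smul]
  exact mul_pos hc (hs_pos_iff.mp ha)

lemma hs_half_add_half (a : HahnSeries I k) : (2⁻¹ : k) • a + (2⁻¹ : k) • a = a := by
  rw [← add_smul]; norm_num

lemma hs_smul_lt_self {a : HahnSeries I k} (ha : 0 < a) : (2⁻¹ : k) • a < a := by
  have := hs_smul_pos (show (0:k) < 2⁻¹ by norm_num) ha
  calc (2⁻¹ : k) • a < (2⁻¹ : k) • a + (2⁻¹ : k) • a := lt_add_of_pos_right _ this
  _ = a := hs_half_add_half a
/-- the basis monomial `e i` in the Hahn product. -/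
noncomputable abbrev ee (i : I) : HahnSeries I k := HahnSeries.single i (1 : k)

lemma ee_ne_zero (i : I) : (ee i : HahnSeries I k) ≠ 0 := by
  intro h
  have := congrArg (fun x => HahnSeries.coeff x i) h
  simp [HahnSeries.coeff_single_same] at this

lemma ee_coeff_ne {i j : I} (h : j ≠ i) : (ee i : HahnSeries I k).coeff j = 0 :=
  HahnSeries.coeff_single_of_ne h

lemma ee_pos (i : I) : (0:HahnSeries I k) < ee i := by
  refine hs_pos_of_coeff (m := i) ?_ ?_
  · rw [HahnSeries.coeff_single_same]; norm_num
  · intro j hj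
    by_contra hlt
    exact hj (ee_coeff_ne (by push_neg at hlt; exact ne_of_lt hlt))

lemma leadIdx_ee (i : I) : leadIdx (ee i : HahnSeries I k) (ee_ne_zero i) = i := by
  refine leadIdx_eq _ ?_ ?_
  · rw [HahnSeries.coeff_single_same]; norm_num
  · intro j hj
    by_contra hlt
    exact hj (ee_coeff_ne (by push_neg at hlt; exact ne_of_lt hlt))

lemma ee_lt_ee {i j : I} (h : i < j) : (ee j : HahnSeries I k) < ee i := by
  rw [hs_lt_iff]
  have hc : (ee i - ee j : HahnSeries I k).coeff i = 1 := by
    rw [HahnSeries.coeff_sub, HahnSeries.coeff_single_same, ee_coeff_ne (ne_of_lt h), sub_zero]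
  have hmin : ∀ j', (ee i - ee j : HahnSeries I k).coeff j' ≠ 0 → i ≤ j' := by
    intro j' hj'
    rw [HahnSeries.coeff_sub, HahnSeries.coeff_single, HahnSeries.coeff_single] at hj'
    by_cases h1 : j' = i
    · exact le_of_eq h1.symm
    · by_cases h2 : j' = j
      · exact h2 ▸ h.le
      · simp [h1, h2] at hj'
  rw [leadCoeff_eq (hc ▸ one_ne_zero) hmin, hc]
  norm_num

lemma leadIdx_neg {a : HahnSeries I k} (ha : a ≠ 0) :
    leadIdx (-a) (neg_ne_zero.mpr ha) = leadIdx a ha := by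
  refine leadIdx_eq _ ?_ ?_
  · rw [HahnSeries.coeff_neg, neg_ne_zero]; exact leadIdx_coeff_ne ha
  · intro j hj
    rw [HahnSeries.coeff_neg, neg_ne_zero] at hj
    exact leadIdx_le ha hj


section Psi

variable {ψ : HahnSeries I k → HahnSeries I k} (hψ : IsHCoupleHahnType ψ)
include hψ

lemma psi_neg {a : HahnSeries I k} (ha : a ≠ 0) : ψ (-a) = ψ a := by
  have := hψ.A2 a (-1) ha (by norm_num)
  rwa [neg_one_zsmul] at this

/-- sandwich principle. -/
lemma psi_sandwich {a b : HahnSeries I k} {c c' : k} (hb : 0 < b) (hc : 0 < c) (hc' : 0 < c')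
    (h1 : c • b ≤ a) (h2 : a ≤ c' • b) : ψ a = ψ b := by
  have hcb : (0:HahnSeries I k) < c • b := hs_smul_pos hc hb
  have ha : 0 < a := lt_of_lt_of_le hcb h1
  have e1 : ψ a ≤ ψ (c • b) := hψ.mono _ _ hcb h1
  have e2 : ψ (c' • b) ≤ ψ a := hψ.mono _ _ ha h2
  rw [hψ.smul_eq b c (ne_of_gt hb) (ne_of_gt hc)] at e1
  rw [hψ.smul_eq b c' (ne_of_gt hb) (ne_of_gt hc')] at e2
  exact le_antisymm e1 e2

lemma psi_lead_pos {a : HahnSeries I k} (ha : 0 < a) :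
    ψ a = ψ (ee (leadIdx a (ne_of_gt ha))) := by
  set i := leadIdx a (ne_of_gt ha) with hi
  have hlc : 0 < leadCoeff a := leadIdx_pos_coeff ha
  refine psi_sandwich hψ (ee_pos i) (c := leadCoeff a / 2) (c' := 2 * leadCoeff a)
    (by positivity) (by positivity) ?_ ?_
  · -- (lc/2) • e i ≤ a
    refine le_of_lt (hs_lt_iff.mpr ?_)
    have hc : (a - (leadCoeff a / 2) • ee i).coeff i = leadCoeff a / 2 := by
      rw [HahnSeries.coeff_sub, HahnSeries.coeff_smul, leadIdx_coeff, HahnSeries.coeff_single_same,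
        smul_eq_mul, mul_one]
      ring
    have hmin : ∀ j, (a - (leadCoeff a / 2) • ee i).coeff j ≠ 0 → i ≤ j := by
      intro j hj
      rw [HahnSeries.coeff_sub, HahnSeries.coeff_smul, HahnSeries.coeff_single] at hj
      by_cases h1 : j = i
      · exact le_of_eq h1.symm
      · rw [if_neg h1, smul_zero, sub_zero] at hj
        exact leadIdx_le _ hj
    rw [leadCoeff_eq (show _ ≠ (0:k) by rw [hc]; positivity) hmin, hc]
    positivity
  · refine le_of_lt (hs_lt_iff.mpr ?_)
    have hc : ((2 * leadCoeff a) • ee i - a).coeff i = leadCoeff a := by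
      rw [HahnSeries.coeff_sub, HahnSeries.coeff_smul, leadIdx_coeff, HahnSeries.coeff_single_same,
        smul_eq_mul, mul_one]
      ring
    have hmin : ∀ j, ((2 * leadCoeff a) • ee i - a).coeff j ≠ 0 → i ≤ j := by
      intro j hj
      rw [HahnSeries.coeff_sub, HahnSeries.coeff_smul, HahnSeries.coeff_single] at hj
      by_cases h1 : j = i
      · exact le_of_eq h1.symm
      · rw [if_neg h1, smul_zero, zero_sub, neg_ne_zero] at hj
        exact leadIdx_le _ hj
    rw [leadCoeff_eq (show _ ≠ (0:k) by rw [hc]; exact ne_of_gt hlc) hmin, hc]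
    exact hlc

lemma psi_lead {a : HahnSeries I k} (ha : a ≠ 0) : ψ a = ψ (ee (leadIdx a ha)) := by
  rcases lt_trichotomy 0 a with h | h | h
  · exact psi_lead_pos hψ h
  · exact absurd h.symm ha
  · have hna : (0:HahnSeries I k) < -a := neg_pos.mpr h
    have := psi_lead_pos hψ hna
    rwa [psi_neg hψ ha, leadIdx_neg ha] at this

lemma psi_ee_mono {i j : I} (h : i ≤ j) : ψ (ee i : HahnSeries I k) ≤ ψ (ee j) := by
  rcases eq_or_lt_of_le h with rfl | h
  · exact le_refl _
  · exact hψ.mono _ _ (ee_pos j) (ee_lt_ee h).le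

lemma psi_ee_strictMono {i j : I} (h : i < j) : ψ (ee i : HahnSeries I k) < ψ (ee j) := by
  refine lt_of_le_of_ne (psi_ee_mono hψ h.le) ?_
  intro heq
  obtain ⟨c, hc, hcase⟩ := hψ.hahnType (ee i) (ee j) (ee_ne_zero i) (ee_ne_zero j) heq
  have hcoeff : (ee i - c • ee j : HahnSeries I k).coeff i = 1 := by
    rw [HahnSeries.coeff_sub, HahnSeries.coeff_single_same, HahnSeries.coeff_smul,
      ee_coeff_ne (ne_of_lt h), smul_zero, sub_zero]
  rcases hcase with h0 | hlt
  · rw [h0] at hcoeff; simp at hcoeff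
  · have hne : (ee i - c • ee j : HahnSeries I k) ≠ 0 := by
      intro h0; rw [h0] at hcoeff; simp at hcoeff
    have hidx : leadIdx _ hne = i := by
      refine leadIdx_eq _ (hcoeff ▸ one_ne_zero) ?_
      intro j' hj'
      rw [HahnSeries.coeff_sub, HahnSeries.coeff_single, HahnSeries.coeff_smul,
        HahnSeries.coeff_single] at hj'
      by_cases h1 : j' = i
      · exact le_of_eq h1.symm
      · by_cases h2 : j' = j
        · exact h2 ▸ h.le
        · simp [h1, h2] at hj'
    have := psi_lead hψ hne
    rw [hidx] at this
    rw [← this] at hlt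
    exact lt_irrefl _ hlt

lemma psi_ee_lt_iff {i j : I} : ψ (ee i : HahnSeries I k) < ψ (ee j) ↔ i < j := by
  constructor
  · intro h
    by_contra hle
    push_neg at hle
    exact absurd (psi_ee_mono hψ hle) (not_le.mpr h)
  · exact psi_ee_strictMono hψ

lemma psi_ee_inj {i j : I} (h : ψ (ee i : HahnSeries I k) = ψ (ee j)) : i = j := by
  rcases lt_trichotomy i j with h1 | h1 | h1
  · exact absurd (psi_ee_strictMono hψ h1) (h ▸ lt_irrefl _)
  · exact h1
  · exact absurd (psi_ee_strictMono hψ h1) (h ▸ lt_irrefl _)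

/-- The core contradiction of the summability arguments. -/
lemma psi_core {ρ ρ' : HahnSeries I k} (h0 : 0 < ρ) (h1 : ρ ≤ ρ')
    (h2 : ψ ρ' < ψ ρ) (h3 : ρ' - ρ ≤ ψ ρ - ψ ρ') : False := by
  have h0' : 0 < ρ' := lt_of_lt_of_le h0 h1
  by_cases hcase : (2⁻¹ : k) • ρ' ≤ ρ
  · have := psi_sandwich hψ h0' (show (0:k) < 2⁻¹ by norm_num) one_pos hcase (by rw [one_smul]; exact h1)
    exact absurd this (ne_of_gt (this ▸ h2 : ψ ρ' < ψ ρ))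
  · push_neg at hcase
    set β := ρ' - ρ with hβdef
    have hhalf : ρ' - (2⁻¹ : k) • ρ' = (2⁻¹ : k) • ρ' :=
      sub_eq_of_eq_add (hs_half_add_half ρ').symm
    have hβ1 : (2⁻¹ : k) • ρ' < β := hhalf ▸ sub_lt_sub_left hcase ρ'
    have hβ2 : β ≤ ρ' := sub_le_self _ h0.le
    have hβpos : (0 : HahnSeries I k) < β :=
      lt_trans (hs_smul_pos (by norm_num) h0') hβ1
    have hψβ : ψ β = ψ ρ' :=
      psi_sandwich hψ h0' (show (0:k) < 2⁻¹ by norm_num) one_pos hβ1.le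
        (by rw [one_smul]; exact hβ2)
    have hA3 := hψ.A3 ((2⁻¹ : k) • β) ρ (ne_of_gt h0)
      (hs_smul_pos (by norm_num) hβpos)
    rw [hψ.smul_eq β (2⁻¹ : k) (ne_of_gt hβpos) (by norm_num), hψβ] at hA3
    have h5 : ψ ρ - ψ ρ' < (2⁻¹ : k) • β := sub_lt_iff_lt_add.mpr hA3
    have h6 : β < β :=
      lt_of_le_of_lt h3 (lt_trans h5 (hs_smul_lt_self hβpos))
    exact lt_irrefl _ h6

end Psi
lemma exists_strictMono_of_infinite {α : Type*} [LinearOrder α] {S T : Set α}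
    (hS : S.IsPWO) (hT : T ⊆ S) (hinf : T.Infinite) :
    ∃ a : ℕ → α, StrictMono a ∧ ∀ n, a n ∈ T := by
  obtain ⟨g, hg⟩ := hS.exists_monotone_subseq (f := fun n => (hinf.natEmbedding T n : α))
    (fun n => hT (hinf.natEmbedding T n).2)
  refine ⟨fun n => (hinf.natEmbedding T (g n) : α), ?_, fun n => (hinf.natEmbedding T (g n)).2⟩
  exact hg.strictMono_of_injective
    (Subtype.coe_injective.comp ((hinf.natEmbedding T).injective.comp (fun _ _ h => g.injective h)))

lemma no_strictAnti_in_isWF {α : Type*} [LinearOrder α] {S : Set α} (hS : S.IsWF)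
    (v : ℕ → α) (hv : ∀ n, v n ∈ S) (hanti : ∀ n, v (n + 1) < v n) : False := by
  have hsub : Set.range v ⊆ S := by rintro x ⟨n, rfl⟩; exact hv n
  have hwf : (Set.range v).IsWF := hS.mono hsub
  have hne : (Set.range v).Nonempty := ⟨v 0, 0, rfl⟩
  obtain ⟨n, hn⟩ := hwf.min_mem hne
  exact hwf.not_lt_min hne ⟨n + 1, rfl⟩ (hn ▸ hanti n)

section Psi2

variable {ψ : HahnSeries I k → HahnSeries I k} (hψ : IsHCoupleHahnType ψ)
include hψ

/-- The central sequence-contradiction lemma. -/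
lemma psi_seq_false {a : ℕ → HahnSeries I k} {ii : ℕ → I}
    (hmem : ∀ n, (a n).coeff (ii n) ≠ 0)
    (hmono : Monotone a)
    (hγ : ∀ n, a (n + 1) + ψ (ee (ii (n + 1))) ≤ a n + ψ (ee (ii n)))
    (hμ : ∀ n, ψ (ee (ii (n + 1)) : HahnSeries I k) < ψ (ee (ii n))) : False := by
  have hμs : StrictAnti (fun n => ψ (ee (ii n) : HahnSeries I k)) := strictAnti_nat_of_succ_lt hμ
  have hii : ∀ {m n : ℕ}, m < n → ii n < ii m := fun h => (psi_ee_lt_iff hψ).mp (hμs h)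
  -- step bound on increments
  have hstep : ∀ m j, (a (m + 1) - a m).coeff j ≠ 0 → ii (m + 1) ≤ j := by
    intro m j hj
    have hA3 := hψ.A3 (ee (ii (m + 1))) (ee (ii m)) (ee_ne_zero _) (ee_pos _)
    have hsub : a (m + 1) - a m ≤ ψ (ee (ii m)) - ψ (ee (ii (m + 1))) := by
      rw [sub_le_sub_iff]
      calc a (m + 1) + ψ (ee (ii (m + 1))) ≤ a m + ψ (ee (ii m)) := hγ m
        _ = ψ (ee (ii m)) + a m := add_comm _ _
    have hlt : a (m + 1) - a m < HahnSeries.single (ii (m + 1)) (1 : k) :=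
      lt_of_le_of_lt hsub (sub_lt_iff_lt_add.mpr hA3)
    exact supp_subset_of_lt_single (sub_nonneg.mpr (hmono (Nat.le_succ m))) hlt hj
  -- telescoped bound
  have htel : ∀ n j, (a n - a 0).coeff j ≠ 0 → ii n ≤ j := by
    intro n
    induction n with
    | zero => intro j hj; simp [sub_self] at hj
    | succ n ih =>
      intro j hj
      have hsplit : a (n + 1) - a 0 = (a (n + 1) - a n) + (a n - a 0) := by abel
      rw [hsplit, HahnSeries.coeff_add] at hj
      rcases ne_or_eq ((a (n + 1) - a n).coeff j) 0 with h1 | h1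
      · exact hstep n j h1
      · have h2 : (a n - a 0).coeff j ≠ 0 := by
          intro h2; rw [h1, h2] at hj; simp at hj
        exact le_trans (le_of_lt (hii (Nat.lt_succ_self n))) (ih j h2)
  -- escape the support of `a 0`
  obtain ⟨n₀, hn₀⟩ : ∃ n₀ : ℕ, ∀ n, n₀ ≤ n → (a 0).coeff (ii n) = 0 := by
    by_cases hT : ∃ n, (a 0).coeff (ii n) ≠ 0
    · obtain ⟨n1, hn1⟩ := hT
      have hTwf : {x : I | x ∈ (a 0).support ∧ ∃ n, ii n = x}.IsWF :=
        ((a 0).isWF_support).mono (fun x hx => hx.1)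
      have hTne : {x : I | x ∈ (a 0).support ∧ ∃ n, ii n = x}.Nonempty :=
        ⟨ii n1, (HahnSeries.mem_support _ _).2 hn1, n1, rfl⟩
      obtain ⟨hmm, nstar, hnstar⟩ := hTwf.min_mem hTne
      refine ⟨nstar + 1, fun n hn => ?_⟩
      by_contra hc
      have hxT : ii n ∈ {x : I | x ∈ (a 0).support ∧ ∃ m, ii m = x} :=
        ⟨(HahnSeries.mem_support _ _).2 hc, n, rfl⟩
      have hlt : ii n < hTwf.min hTne :=
        hnstar ▸ hii (lt_of_lt_of_le (Nat.lt_succ_self nstar) hn)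
      exact hTwf.not_lt_min hTne hxT hlt
    · push_neg at hT; exact ⟨0, fun n _ => hT n⟩
  -- the two witnesses
  have hp0 : (a 0).coeff (ii (n₀ + 1)) = 0 := hn₀ _ (by omega)
  have hq0 : (a 0).coeff (ii (n₀ + 2)) = 0 := hn₀ _ (by omega)
  have hρc : (a (n₀ + 1) - a 0).coeff (ii (n₀ + 1)) ≠ 0 := by
    rw [HahnSeries.coeff_sub, hp0, sub_zero]; exact hmem _
  have hρ'c : (a (n₀ + 2) - a 0).coeff (ii (n₀ + 2)) ≠ 0 := by
    rw [HahnSeries.coeff_sub, hq0, sub_zero]; exact hmem _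
  have hρne : a (n₀ + 1) - a 0 ≠ 0 := fun h => hρc (by rw [h]; simp)
  have hρ'ne : a (n₀ + 2) - a 0 ≠ 0 := fun h => hρ'c (by rw [h]; simp)
  have hρpos : 0 < a (n₀ + 1) - a 0 :=
    lt_of_le_of_ne (sub_nonneg.mpr (hmono (Nat.zero_le _))) (Ne.symm hρne)
  have hρlead : leadIdx _ hρne = ii (n₀ + 1) := leadIdx_eq _ hρc (htel _)
  have hρ'lead : leadIdx _ hρ'ne = ii (n₀ + 2) := leadIdx_eq _ hρ'c (htel _)
  have hψρ : ψ (a (n₀ + 1) - a 0) = ψ (ee (ii (n₀ + 1))) := by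
    have := psi_lead hψ hρne; rwa [hρlead] at this
  have hψρ' : ψ (a (n₀ + 2) - a 0) = ψ (ee (ii (n₀ + 2))) := by
    have := psi_lead hψ hρ'ne; rwa [hρ'lead] at this
  refine psi_core hψ (ρ' := a (n₀ + 2) - a 0) hρpos
    (sub_le_sub_right (hmono (show n₀ + 1 ≤ n₀ + 2 by omega)) _) ?_ ?_
  · rw [hψρ, hψρ']; exact hμs (by omega)
  · rw [hψρ, hψρ']
    have h4 : a (n₀ + 2) + ψ (ee (ii (n₀ + 2))) ≤ a (n₀ + 1) + ψ (ee (ii (n₀ + 1))) := hγ (n₀ + 1)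
    have h5 : a (n₀ + 2) - a (n₀ + 1) ≤ ψ (ee (ii (n₀ + 1))) - ψ (ee (ii (n₀ + 2))) := by
      rw [sub_le_sub_iff]
      calc a (n₀ + 2) + ψ (ee (ii (n₀ + 2))) ≤ a (n₀ + 1) + ψ (ee (ii (n₀ + 1))) := h4
        _ = ψ (ee (ii (n₀ + 1))) + a (n₀ + 1) := add_comm _ _
    calc (a (n₀ + 2) - a 0) - (a (n₀ + 1) - a 0) = a (n₀ + 2) - a (n₀ + 1) := by abel
      _ ≤ _ := h5

/-- Lemma A: fibers of the monomial-derivative support map are finite. -/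
lemma fiber_finite {S : Set (HahnSeries I k)} (hS : S.IsPWO) (γ : HahnSeries I k) :
    {α ∈ S | ∃ i, α.coeff i ≠ 0 ∧ α + ψ (ee i) = γ}.Finite := by
  by_contra hinf
  obtain ⟨a, hasm, hamem⟩ := exists_strictMono_of_infinite hS (fun α hα => hα.1) hinf
  have hch : ∀ n, ∃ i, (a n).coeff i ≠ 0 ∧ a n + ψ (ee i) = γ := fun n => (hamem n).2
  choose ii hii1 hii2 using hch
  have hμval : ∀ n, ψ (ee (ii n) : HahnSeries I k) = γ - a n := fun n =>
    eq_sub_of_add_eq' (hii2 n)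
  refine psi_seq_false hψ hii1 hasm.monotone (fun n => ?_) (fun n => ?_)
  · rw [hii2, hii2]
  · rw [hμval, hμval]
    exact sub_lt_sub_left (hasm (Nat.lt_succ_self n)) γ

/-- Lemma A♯: pair version for products. -/
lemma pair_fiber_finite {S U : Set (HahnSeries I k)} (hS : S.IsPWO) (hU : U.IsPWO)
    (γ : HahnSeries I k) :
    {p : HahnSeries I k × HahnSeries I k |
      p.1 ∈ S ∧ p.2 ∈ U ∧ ∃ i, p.1.coeff i ≠ 0 ∧ p.1 + p.2 + ψ (ee i) = γ}.Finite := by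
  by_contra hinf
  -- each fiber over the first coordinate is finite
  have hfib : ∀ u : HahnSeries I k,
      {v ∈ U | ∃ i, u.coeff i ≠ 0 ∧ u + v + ψ (ee i) = γ}.Finite := by
    intro u
    have himg : {v ∈ U | ∃ i, u.coeff i ≠ 0 ∧ u + v + ψ (ee i) = γ} ⊆
        (fun i => γ - u - ψ (ee i)) '' {i | u.coeff i ≠ 0 ∧ γ - u - ψ (ee i) ∈ U} := by
      rintro v ⟨hvU, i, hi1, hi2⟩
      have hv : v = γ - u - ψ (ee i) := by
        rw [← hi2]; abel
      exact ⟨i, ⟨hi1, hv ▸ hvU⟩, hv.symm⟩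
    by_contra hfin
    have hJinf : {i | u.coeff i ≠ 0 ∧ γ - u - ψ (ee i) ∈ U}.Infinite := by
      intro hJfin
      exact hfin (Set.Finite.subset (hJfin.image _) himg)
    have hJpwo : {i | u.coeff i ≠ 0 ∧ γ - u - ψ (ee i) ∈ U} ⊆ u.support := fun i hi => hi.1
    obtain ⟨b, hbs, hbm⟩ := exists_strictMono_of_infinite (u.isWF_support.isPWO)
      hJpwo hJinf
    refine no_strictAnti_in_isWF hU.isWF (fun n => γ - u - ψ (ee (b n))) (fun n => (hbm n).2)
      (fun n => ?_)
    have := psi_ee_strictMono hψ (hbs (Nat.lt_succ_self n))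
    exact sub_lt_sub_left this (γ - u)
  -- hence the first projection is infinite
  have hproj : (Prod.fst '' {p : HahnSeries I k × HahnSeries I k |
      p.1 ∈ S ∧ p.2 ∈ U ∧ ∃ i, p.1.coeff i ≠ 0 ∧ p.1 + p.2 + ψ (ee i) = γ}).Infinite := by
    intro hfin
    refine hinf (Set.Finite.subset (Set.Finite.biUnion hfin
      (fun u _ => (hfib u).image (fun v => (u, v)))) ?_)
    rintro ⟨u, v⟩ hp
    exact Set.mem_biUnion ⟨⟨u, v⟩, hp, rfl⟩ ⟨v, ⟨hp.2.1, hp.2.2⟩, rfl⟩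
  obtain ⟨a, hasm, hamem⟩ := exists_strictMono_of_infinite hS
    (fun u hu => by obtain ⟨p, hp, rfl⟩ := hu; exact hp.1) hproj
  have hch : ∀ n, ∃ v, v ∈ U ∧ ∃ i, (a n).coeff i ≠ 0 ∧ a n + v + ψ (ee i) = γ := by
    intro n
    obtain ⟨p, hp, hfst⟩ := hamem n
    exact ⟨p.2, hp.2.1, by rw [← hfst]; exact hp.2.2⟩
  choose v hv1 ii hii1 hii2 using hch
  obtain ⟨g, hg⟩ := hU.exists_monotone_subseq (f := v) hv1
  have hgsm : StrictMono (fun n => g n) := g.strictMono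
  have hμval : ∀ n, ψ (ee (ii (g n)) : HahnSeries I k) = γ - v (g n) - a (g n) := by
    intro n
    have := hii2 (g n)
    rw [← this]; abel
  refine psi_seq_false hψ (a := fun n => a (g n)) (ii := fun n => ii (g n))
    (fun n => hii1 (g n)) (fun m n h => hasm.monotone (hgsm.monotone h)) (fun n => ?_) (fun n => ?_)
  · -- γ-monotonicity
    have h1 : ψ (ee (ii (g (n+1))) : HahnSeries I k) = γ - v (g (n+1)) - a (g (n+1)) := hμval (n+1)
    have h2 : ψ (ee (ii (g n)) : HahnSeries I k) = γ - v (g n) - a (g n) := hμval n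
    rw [h1, h2]
    have hvle : v (g n) ≤ v (g (n+1)) := hg (Nat.le_succ n)
    calc a (g (n+1)) + (γ - v (g (n+1)) - a (g (n+1))) = γ - v (g (n+1)) := by abel
      _ ≤ γ - v (g n) := sub_le_sub_left hvle γ
      _ = a (g n) + (γ - v (g n) - a (g n)) := by abel
  · rw [hμval, hμval]
    have hvle : v (g n) ≤ v (g (n+1)) := hg (Nat.le_succ n)
    have halt : a (g n) < a (g (n+1)) := hasm (hgsm (Nat.lt_succ_self n))
    calc γ - v (g (n+1)) - a (g (n+1)) < γ - v (g (n+1)) - a (g n) :=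
          sub_lt_sub_left halt _
      _ ≤ γ - v (g n) - a (g n) := sub_le_sub_right (sub_le_sub_left hvle γ) _

/-- Lemma B: the union of supports of monomial derivatives is PWO. -/
lemma deriv_support_isPWO {S : Set (HahnSeries I k)} (hS : S.IsPWO) :
    {γ : HahnSeries I k | ∃ α ∈ S, ∃ i, α.coeff i ≠ 0 ∧ α + ψ (ee i) = γ}.IsPWO := by
  rw [Set.IsPWO, Set.partiallyWellOrderedOn_iff_exists_lt]
  intro f hf
  by_contra hcon
  push_neg at hcon
  have hdec : ∀ {m n}, m < n → f n < f m := fun {m n} h => hcon m n h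
  have hch : ∀ n, ∃ α ∈ S, ∃ i, α.coeff i ≠ 0 ∧ α + ψ (ee i) = f n := fun n => hf n
  choose α hα ii hii1 hii2 using hch
  obtain ⟨g, hg⟩ := hS.exists_monotone_subseq (f := α) hα
  have hgsm : StrictMono (fun n => g n) := g.strictMono
  have hμval : ∀ n, ψ (ee (ii (g n)) : HahnSeries I k) = f (g n) - α (g n) := by
    intro n
    have := hii2 (g n)
    rw [← this]; abel
  refine psi_seq_false hψ (a := fun n => α (g n)) (ii := fun n => ii (g n))
    (fun n => hii1 (g n)) (fun m n h => hg h) (fun n => ?_) (fun n => ?_)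
  · have h1 := hμval (n+1); have h2 := hμval n
    rw [h1, h2]
    have : f (g (n+1)) ≤ f (g n) := (hdec (hgsm (Nat.lt_succ_self n))).le
    calc α (g (n+1)) + (f (g (n+1)) - α (g (n+1))) = f (g (n+1)) := by abel
      _ ≤ f (g n) := this
      _ = α (g n) + (f (g n) - α (g n)) := by abel
  · rw [hμval, hμval]
    have hflt : f (g (n+1)) < f (g n) := hdec (hgsm (Nat.lt_succ_self n))
    have hale : α (g n) ≤ α (g (n+1)) := hg (Nat.le_succ n)
    calc f (g (n+1)) - α (g (n+1)) ≤ f (g (n+1)) - α (g n) := sub_le_sub_left hale _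
      _ < f (g n) - α (g n) := sub_lt_sub_right hflt _

end Psi2
section Tlemmas

variable {ψ : HahnSeries I k → HahnSeries I k} (hψ : IsHCoupleHahnType ψ)

lemma tderivCoeff_zero_left (γ : HahnSeries I k) : tderivCoeff ψ 0 γ = 0 := by
  have : {i : I | i ∈ (0 : HahnSeries I k).support ∧ (0:HahnSeries I k) + ψ (HahnSeries.single i 1) = γ} = ∅ := by
    ext i; simp
  rw [tderivCoeff, this, finsum_mem_empty, neg_zero]

include hψ

lemma tderivCoeff_eq {α γ : HahnSeries I k} {i : I} (hi : α + ψ (ee i) = γ) :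
    tderivCoeff ψ α γ = -α.coeff i := by
  have hsub : ∀ i', i' ∈ α.support ∧ α + ψ (HahnSeries.single i' (1:k)) = γ → i' = i := by
    rintro i' ⟨-, h2⟩
    exact psi_ee_inj hψ (add_left_cancel (h2.trans hi.symm))
  by_cases hmem : i ∈ α.support
  · have hset : {i' : I | i' ∈ α.support ∧ α + ψ (HahnSeries.single i' 1) = γ} = {i} := by
      ext i'
      constructor
      · intro h; exact hsub i' h
      · rintro rfl; exact ⟨hmem, hi⟩
    rw [tderivCoeff, hset, finsum_mem_singleton]
  · have hset : {i' : I | i' ∈ α.support ∧ α + ψ (HahnSeries.single i' 1) = γ} = ∅ := by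
      ext i'
      simp only [Set.mem_setOf_eq, Set.mem_empty_iff_false, iff_false]
      intro h
      exact hmem (hsub i' h ▸ h.1)
    rw [tderivCoeff, hset, finsum_mem_empty, neg_zero]
    rw [HahnSeries.mem_support, not_not] at hmem
    rw [hmem, neg_zero]

omit hψ in
lemma tderivCoeff_eq_zero {α γ : HahnSeries I k} (h : ∀ i, α + ψ (ee i) ≠ γ) :
    tderivCoeff ψ α γ = 0 := by
  have hset : {i' : I | i' ∈ α.support ∧ α + ψ (HahnSeries.single i' 1) = γ} = ∅ := by
    ext i'
    simp only [Set.mem_setOf_eq, Set.mem_empty_iff_false, iff_false]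
    rintro ⟨-, h2⟩
    exact h i' h2
  rw [tderivCoeff, hset, finsum_mem_empty, neg_zero]

lemma tderivCoeff_ne_imp {α γ : HahnSeries I k} (h : tderivCoeff ψ α γ ≠ 0) :
    ∃ i, α.coeff i ≠ 0 ∧ α + ψ (ee i) = γ := by
  by_cases hex : ∃ i, α + ψ (ee i) = γ
  · obtain ⟨i, hi⟩ := hex
    rw [tderivCoeff_eq hψ hi] at h
    exact ⟨i, fun h0 => h (by rw [h0, neg_zero]), hi⟩
  · push_neg at hex
    exact absurd (tderivCoeff_eq_zero hex) h

lemma tderivCoeff_add (u v γ : HahnSeries I k) :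
    tderivCoeff ψ (u + v) γ = tderivCoeff ψ u (γ - v) + tderivCoeff ψ v (γ - u) := by
  by_cases hex : ∃ i, u + v + ψ (ee i) = γ
  · obtain ⟨i, hi⟩ := hex
    have hu : u + ψ (ee i) = γ - v := by rw [← hi]; abel
    have hv : v + ψ (ee i) = γ - u := by rw [← hi]; abel
    rw [tderivCoeff_eq hψ hi, tderivCoeff_eq hψ hu, tderivCoeff_eq hψ hv,
      HahnSeries.coeff_add, neg_add]
  · push_neg at hex
    have hu : ∀ i, u + ψ (ee i) ≠ γ - v := by
      intro i h
      exact hex i (by rw [← sub_eq_of_eq_add' h.symm]; abel)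
    have hv : ∀ i, v + ψ (ee i) ≠ γ - u := by
      intro i h
      exact hex i (by rw [← sub_eq_of_eq_add' h.symm]; abel)
    rw [tderivCoeff_eq_zero hex, tderivCoeff_eq_zero hu, tderivCoeff_eq_zero hv, add_zero]

end Tlemmas

section Dlemmas

variable {ψ : HahnSeries I k → HahnSeries I k} (hψ : IsHCoupleHahnType ψ)
variable {D : HahnSeries (HahnSeries I k) k → HahnSeries (HahnSeries I k) k}
variable (hD : ∀ (f : HahnSeries (HahnSeries I k) k) (γ : HahnSeries I k),
      (D f).coeff γ = ∑ᶠ α : HahnSeries I k, f.coeff α * tderivCoeff ψ α γ)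

include hψ

lemma D_support_finite (f : HahnSeries (HahnSeries I k) k) (γ : HahnSeries I k) :
    (Function.support fun α => f.coeff α * tderivCoeff ψ α γ).Finite := by
  refine Set.Finite.subset (fiber_finite hψ f.isPWO_support γ) ?_
  intro α hα
  rw [Function.mem_support] at hα
  refine ⟨left_ne_zero_of_mul hα, ?_⟩
  exact tderivCoeff_ne_imp hψ (right_ne_zero_of_mul hα)

include hD

omit hψ in
lemma D_coeff_sum (f : HahnSeries (HahnSeries I k) k) (γ : HahnSeries I k) (s : Finset (HahnSeries I k))
    (hs : ∀ α, f.coeff α * tderivCoeff ψ α γ ≠ 0 → α ∈ s) :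
    (D f).coeff γ = ∑ α ∈ s, f.coeff α * tderivCoeff ψ α γ := by
  rw [hD]
  exact finsum_eq_finset_sum_of_support_subset _ (fun α hα => hs α hα)

lemma D_add (x y : HahnSeries (HahnSeries I k) k) : D (x + y) = D x + D y := by
  ext γ
  rw [HahnSeries.coeff_add, hD, hD, hD]
  have : ∀ α : HahnSeries I k, (x + y).coeff α * tderivCoeff ψ α γ =
      x.coeff α * tderivCoeff ψ α γ + y.coeff α * tderivCoeff ψ α γ := by
    intro α; rw [HahnSeries.coeff_add, add_mul]
  rw [finsum_congr this]
  exact finsum_add_distrib (D_support_finite hψ x γ) (D_support_finite hψ y γ)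

omit hψ in
lemma D_zero' : D 0 = 0 := by
  ext γ
  rw [hD]
  simp

lemma D_neg (x : HahnSeries (HahnSeries I k) k) : D (-x) = -D x := by
  have h := D_add hψ hD x (-x)
  rw [add_neg_cancel, D_zero' hD] at h
  exact (neg_eq_of_add_eq_zero_right h.symm).symm

lemma D_sub (x y : HahnSeries (HahnSeries I k) k) : D (x - y) = D x - D y := by
  rw [sub_eq_add_neg, D_add hψ hD, D_neg hψ hD, sub_eq_add_neg]

omit hψ in
lemma D_C (c : k) : D (HahnSeries.C c) = 0 := by
  ext γ
  rw [hD]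
  have : ∀ α : HahnSeries I k, (HahnSeries.C c : HahnSeries (HahnSeries I k) k).coeff α *
      tderivCoeff ψ α γ = 0 := by
    intro α
    by_cases hα : α = 0
    · rw [hα, tderivCoeff_zero_left, mul_zero]
    · rw [HahnSeries.C_apply, HahnSeries.coeff_single_of_ne hα, zero_mul]
  rw [finsum_congr this]
  simp

end Dlemmas
section Dlead

variable {ψ : HahnSeries I k → HahnSeries I k} (hψ : IsHCoupleHahnType ψ)
variable {D : HahnSeries (HahnSeries I k) k → HahnSeries (HahnSeries I k) k}
variable (hD : ∀ (f : HahnSeries (HahnSeries I k) k) (γ : HahnSeries I k),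
      (D f).coeff γ = ∑ᶠ α : HahnSeries I k, f.coeff α * tderivCoeff ψ α γ)

include hψ hD

/-- The leading-term analysis of the derivative. -/
lemma D_leading {f : HahnSeries (HahnSeries I k) k} (hf : f ≠ 0) (hfo : f.order ≠ 0) :
    D f ≠ 0 ∧ (D f).order = f.order + ψ f.order ∧
      (D f).coeff (f.order + ψ f.order) =
        -(f.coeff f.order * (f.order).coeff (leadIdx f.order hfo)) := by
  set β := f.order with hβ
  set i₀ := leadIdx β hfo with hi₀
  have hψβ : ψ β = ψ (ee i₀) := psi_lead hψ hfo
  -- claim 1 : all other support points of the derivative family are above `β + ψ (ee i₀)`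
  have claim1 : ∀ α : HahnSeries I k, f.coeff α ≠ 0 → ∀ i : I, α.coeff i ≠ 0 →
      ¬(α = β ∧ i = i₀) → β + ψ (ee i₀) < α + ψ (ee i) := by
    intro α hα i hi hne
    have hβle : β ≤ α := HahnSeries.order_le_of_coeff_ne_zero hα
    rcases eq_or_lt_of_le hβle with rfl | hβlt
    · -- α = β, so i ≠ i₀ and i₀ < i
      have hii : i ≠ i₀ := fun h => hne ⟨rfl, h⟩
      have : i₀ ≤ i := leadIdx_le hfo hi
      exact add_lt_add_right (psi_ee_strictMono hψ (lt_of_le_of_ne this (Ne.symm hii))) _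
    · rcases le_or_gt (ψ (ee i₀) : HahnSeries I k) (ψ (ee i)) with hle | hlt
      · exact add_lt_add_of_lt_of_le hβlt hle
      · -- i < i₀, so i is in the support of α - β
        have hii : i < i₀ := (psi_ee_lt_iff hψ).mp hlt
        have hβi : β.coeff i = 0 := by
          by_contra hc
          exact absurd (leadIdx_le hfo hc) (not_le.mpr hii)
        have hδc : (α - β).coeff i ≠ 0 := by
          rw [HahnSeries.coeff_sub, hβi, sub_zero]; exact hi
        have hδne : α - β ≠ 0 := fun h => hδc (by rw [h]; simp)
        have hδpos : 0 < α - β := sub_pos.mpr hβlt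
        have hj : leadIdx _ hδne ≤ i := leadIdx_le hδne hδc
        have hψδ : ψ (α - β) = ψ (ee (leadIdx _ hδne)) := psi_lead hψ hδne
        have hA3 := hψ.A3 (α - β) (ee i₀) (ee_ne_zero i₀) hδpos
        have h5 : ψ (ee i₀ : HahnSeries I k) < (α - β) + ψ (ee i) := by
          refine lt_of_lt_of_le hA3 (add_le_add_right ?_ _)
          rw [hψδ]
          exact psi_ee_mono hψ hj
        calc β + ψ (ee i₀) < β + ((α - β) + ψ (ee i)) := add_lt_add_right h5 β
          _ = α + ψ (ee i) := by abel
  -- claim 2 : the coefficient at `β + ψ (ee i₀)`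
  have claim2 : (D f).coeff (β + ψ (ee i₀)) = -(f.coeff β * β.coeff i₀) := by
    rw [D_coeff_sum hD f _ {β} ?side]
    case side =>
      intro α hα
      have hα1 : f.coeff α ≠ 0 := left_ne_zero_of_mul hα
      obtain ⟨i, hi1, hi2⟩ := tderivCoeff_ne_imp hψ (right_ne_zero_of_mul hα)
      rw [Finset.mem_singleton]
      by_contra hne
      refine absurd hi2 (ne_of_gt ?_)
      exact claim1 α hα1 i hi1 (fun h => hne h.1)
    rw [Finset.sum_singleton, tderivCoeff_eq hψ rfl, mul_neg]
  -- claim 3 : everything below vanishes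
  have claim3 : ∀ γ', γ' < β + ψ (ee i₀) → (D f).coeff γ' = 0 := by
    intro γ' hγ'
    rw [D_coeff_sum hD f γ' ∅ ?side, Finset.sum_empty]
    case side =>
      intro α hα
      exfalso
      have hα1 : f.coeff α ≠ 0 := left_ne_zero_of_mul hα
      obtain ⟨i, hi1, hi2⟩ := tderivCoeff_ne_imp hψ (right_ne_zero_of_mul hα)
      by_cases hne : α = β ∧ i = i₀
      · rw [hne.1, hne.2] at hi2
        rw [hi2] at hγ'
        exact lt_irrefl _ hγ'
      · rw [← hi2] at hγ'
        exact absurd (claim1 α hα1 i hi1 hne) (not_lt.mpr hγ'.le)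
  have hcne : (D f).coeff (β + ψ (ee i₀)) ≠ 0 := by
    rw [claim2, neg_ne_zero]
    exact mul_ne_zero ((HahnSeries.coeff_order_eq_zero.not.mpr hf)) (leadIdx_coeff_ne hfo)
  have hDne : D f ≠ 0 := fun h => hcne (by rw [h]; simp)
  have horder : (D f).order = β + ψ (ee i₀) := by
    refine le_antisymm (HahnSeries.order_le_of_coeff_ne_zero hcne) ?_
    by_contra hlt
    push_neg at hlt
    exact (HahnSeries.coeff_order_eq_zero.not.mpr hDne) (claim3 _ hlt)
  refine ⟨hDne, ?_, ?_⟩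
  · rw [horder, hψβ]
  · rw [hψβ]; exact claim2

end Dlead
lemma sum_eq_sum_of_support {M α : Type*} [AddCommMonoid M] [DecidableEq α] {f : α → M}
    {s t : Finset α} (hs : ∀ a, f a ≠ 0 → a ∈ s) (ht : ∀ a, f a ≠ 0 → a ∈ t) :
    ∑ a ∈ s, f a = ∑ a ∈ t, f a := by
  calc ∑ a ∈ s, f a = ∑ a ∈ s ∪ t, f a :=
        Finset.sum_subset Finset.subset_union_left
          (fun a _ hns => by by_contra h0; exact hns (hs a h0))
    _ = ∑ a ∈ t, f a :=
        (Finset.sum_subset Finset.subset_union_right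
          (fun a _ hnt => by by_contra h0; exact hnt (ht a h0))).symm

section Leibniz

variable {ψ : HahnSeries I k → HahnSeries I k} (hψ : IsHCoupleHahnType ψ)
variable {D : HahnSeries (HahnSeries I k) k → HahnSeries (HahnSeries I k) k}
variable (hD : ∀ (f : HahnSeries (HahnSeries I k) k) (γ : HahnSeries I k),
      (D f).coeff γ = ∑ᶠ α : HahnSeries I k, f.coeff α * tderivCoeff ψ α γ)

/-- coefficient of a product against an enclosing finite set. -/
lemma hs_mul_coeff_sum {x z : HahnSeries (HahnSeries I k) k} {γ : HahnSeries I k}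
    {P : Finset (HahnSeries I k)} (hP : ∀ u, x.coeff u ≠ 0 → z.coeff (γ - u) ≠ 0 → u ∈ P) :
    (x * z).coeff γ = ∑ u ∈ P, x.coeff u * z.coeff (γ - u) := by
  classical
  rw [HahnSeries.coeff_mul]
  have hinj : ∀ p ∈ Finset.antidiagonal x.isPWO_support z.isPWO_support γ,
      ∀ q ∈ Finset.antidiagonal x.isPWO_support z.isPWO_support γ,
      p.1 = q.1 → p = q := by
    intro p hp q hq h
    rw [Finset.mem_antidiagonal] at hp hq
    have h2 : p.2 = q.2 := by
      have hp2 : p.2 = γ - p.1 := eq_sub_of_add_eq' hp.2.2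
      have hq2 : q.2 = γ - q.1 := eq_sub_of_add_eq' hq.2.2
      rw [hp2, hq2, h]
    exact Prod.ext h h2
  have himg : ∑ u ∈ (Finset.antidiagonal x.isPWO_support z.isPWO_support γ).image Prod.fst,
      x.coeff u * z.coeff (γ - u)
      = ∑ p ∈ Finset.antidiagonal x.isPWO_support z.isPWO_support γ,
        x.coeff p.1 * z.coeff p.2 := by
    rw [Finset.sum_image hinj]
    refine Finset.sum_congr rfl (fun p hp => ?_)
    rw [Finset.mem_antidiagonal] at hp
    rw [← eq_sub_of_add_eq' hp.2.2]
  rw [← himg]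
  refine Finset.sum_subset ?_ ?_
  · intro u hu
    obtain ⟨p, hp, rfl⟩ := Finset.mem_image.mp hu
    rw [Finset.mem_antidiagonal] at hp
    refine hP _ hp.1 ?_
    rw [← eq_sub_of_add_eq' hp.2.2]
    exact hp.2.1
  · intro u hu hnot
    by_contra hne
    have hx : x.coeff u ≠ 0 := left_ne_zero_of_mul hne
    have hz : z.coeff (γ - u) ≠ 0 := right_ne_zero_of_mul hne
    refine hnot (Finset.mem_image.mpr ⟨(u, γ - u), ?_, rfl⟩)
    rw [Finset.mem_antidiagonal]
    exact ⟨hx, hz, add_sub_cancel u γ⟩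

include hψ hD

lemma D_mul (x y : HahnSeries (HahnSeries I k) k) : D (x * y) = x * D y + y * D x := by
  classical
  ext γ
  have hA1fin : {p : HahnSeries I k × HahnSeries I k | p.1 ∈ x.support ∧ p.2 ∈ y.support ∧
      ∃ i, p.1.coeff i ≠ 0 ∧ p.1 + p.2 + ψ (ee i) = γ}.Finite :=
    pair_fiber_finite hψ x.isPWO_support y.isPWO_support γ
  have hA2fin : {p : HahnSeries I k × HahnSeries I k | p.1 ∈ x.support ∧ p.2 ∈ y.support ∧
      ∃ i, p.2.coeff i ≠ 0 ∧ p.1 + p.2 + ψ (ee i) = γ}.Finite := by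
    have h := (pair_fiber_finite hψ y.isPWO_support x.isPWO_support γ).image Prod.swap
    refine h.subset ?_
    rintro ⟨u, v⟩ ⟨h1, h2, i, h3, h4⟩
    exact ⟨(v, u), ⟨h2, h1, i, h3, by rw [← h4]; abel⟩, rfl⟩
  have hAfin : ({p : HahnSeries I k × HahnSeries I k | p.1 ∈ x.support ∧ p.2 ∈ y.support ∧
      ∃ i, p.1.coeff i ≠ 0 ∧ p.1 + p.2 + ψ (ee i) = γ} ∪
      {p : HahnSeries I k × HahnSeries I k | p.1 ∈ x.support ∧ p.2 ∈ y.support ∧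
      ∃ i, p.2.coeff i ≠ 0 ∧ p.1 + p.2 + ψ (ee i) = γ}).Finite := hA1fin.union hA2fin
  set A := {p : HahnSeries I k × HahnSeries I k | p.1 ∈ x.support ∧ p.2 ∈ y.support ∧
      ∃ i, p.1.coeff i ≠ 0 ∧ p.1 + p.2 + ψ (ee i) = γ} ∪
      {p : HahnSeries I k × HahnSeries I k | p.1 ∈ x.support ∧ p.2 ∈ y.support ∧
      ∃ i, p.2.coeff i ≠ 0 ∧ p.1 + p.2 + ψ (ee i) = γ} with hAdef
  set P : Finset (HahnSeries I k) := hAfin.toFinset.image Prod.fst with hPdef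
  set Q : Finset (HahnSeries I k) := hAfin.toFinset.image Prod.snd with hQdef
  have hPmem : ∀ {u v : HahnSeries I k}, (u, v) ∈ A → u ∈ P ∧ v ∈ Q := by
    intro u v h
    exact ⟨Finset.mem_image.mpr ⟨(u, v), hAfin.mem_toFinset.mpr h, rfl⟩,
      Finset.mem_image.mpr ⟨(u, v), hAfin.mem_toFinset.mpr h, rfl⟩⟩
  have hPsupp : ∀ u ∈ P, x.coeff u ≠ 0 := by
    intro u hu
    obtain ⟨p, hp, rfl⟩ := Finset.mem_image.mp hu
    rcases hAfin.mem_toFinset.mp hp with h | h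
    · exact h.1
    · exact h.1
  have hQsupp : ∀ v ∈ Q, y.coeff v ≠ 0 := by
    intro v hv
    obtain ⟨p, hp, rfl⟩ := Finset.mem_image.mp hv
    rcases hAfin.mem_toFinset.mp hp with h | h
    · exact h.2.1
    · exact h.2.1
  have hmemA2 : ∀ {u β : HahnSeries I k}, x.coeff u ≠ 0 →
      y.coeff β * tderivCoeff ψ β (γ - u) ≠ 0 → (u, β) ∈ A := by
    intro u β hu hβ
    obtain ⟨i, hi1, hi2⟩ := tderivCoeff_ne_imp hψ (right_ne_zero_of_mul hβ)
    refine Or.inr ⟨?_, ?_, i, hi1, ?_⟩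
    · exact hu
    · exact left_ne_zero_of_mul hβ
    · show u + β + ψ (ee i) = γ
      rw [add_assoc, hi2, add_sub_cancel]
  have hmemA1 : ∀ {v α : HahnSeries I k}, y.coeff v ≠ 0 →
      x.coeff α * tderivCoeff ψ α (γ - v) ≠ 0 → (α, v) ∈ A := by
    intro v α hv hα
    obtain ⟨i, hi1, hi2⟩ := tderivCoeff_ne_imp hψ (right_ne_zero_of_mul hα)
    refine Or.inl ⟨left_ne_zero_of_mul hα, hv, i, hi1, ?_⟩
    show α + v + ψ (ee i) = γ
    rw [add_comm α v, add_assoc, hi2, add_sub_cancel]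
  have hgA : ∀ p : HahnSeries I k × HahnSeries I k,
      x.coeff p.1 * y.coeff p.2 * tderivCoeff ψ (p.1 + p.2) γ ≠ 0 → p ∈ A := by
    rintro ⟨u, v⟩ h
    have hu : x.coeff u ≠ 0 := left_ne_zero_of_mul (left_ne_zero_of_mul h)
    have hv : y.coeff v ≠ 0 := right_ne_zero_of_mul (left_ne_zero_of_mul h)
    obtain ⟨i, hi1, hi2⟩ := tderivCoeff_ne_imp hψ (right_ne_zero_of_mul h)
    rw [HahnSeries.coeff_add] at hi1
    rcases ne_or_eq (u.coeff i) 0 with h1 | h1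
    · exact Or.inl ⟨hu, hv, i, h1, hi2⟩
    · have h2 : v.coeff i ≠ 0 := by
        intro h2; rw [h1, h2] at hi1; simp at hi1
      exact Or.inr ⟨hu, hv, i, h2, hi2⟩
  -- Step 1 : rectangle form of the derivative of the product
  have hB0fin := fiber_finite hψ (x.isPWO_support.add y.isPWO_support) γ
  have step1 : (D (x * y)).coeff γ =
      ∑ p ∈ P ×ˢ Q, x.coeff p.1 * y.coeff p.2 * tderivCoeff ψ (p.1 + p.2) γ := by
    rw [D_coeff_sum hD _ _ hB0fin.toFinset ?side]
    case side =>
      intro α hα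
      rw [hB0fin.mem_toFinset]
      refine ⟨HahnSeries.support_mul_subset (left_ne_zero_of_mul hα), ?_⟩
      exact tderivCoeff_ne_imp hψ (right_ne_zero_of_mul hα)
    have hexp : ∀ α ∈ hB0fin.toFinset, (x * y).coeff α * tderivCoeff ψ α γ =
        ∑ p ∈ Finset.antidiagonal x.isPWO_support y.isPWO_support α,
          x.coeff p.1 * y.coeff p.2 * tderivCoeff ψ (p.1 + p.2) γ := by
      intro α hα
      rw [HahnSeries.coeff_mul, Finset.sum_mul]
      refine Finset.sum_congr rfl (fun p hp => ?_)
      rw [Finset.mem_antidiagonal] at hp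
      rw [hp.2.2]
    rw [Finset.sum_congr rfl hexp, ← Finset.sum_biUnion ?disj]
    case disj =>
      intro α hα β hβ hne s hsα hsβ p hp
      exfalso
      have h1 := Finset.mem_antidiagonal.mp (hsα hp)
      have h2 := Finset.mem_antidiagonal.mp (hsβ hp)
      exact hne (h1.2.2 ▸ h2.2.2 ▸ rfl)
    refine sum_eq_sum_of_support ?_ ?_
    · rintro ⟨u, v⟩ hne
      have hmem := hgA _ hne
      have hu : x.coeff u ≠ 0 := left_ne_zero_of_mul (left_ne_zero_of_mul hne)
      have hv : y.coeff v ≠ 0 := right_ne_zero_of_mul (left_ne_zero_of_mul hne)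
      have hT := tderivCoeff_ne_imp hψ (right_ne_zero_of_mul hne)
      refine Finset.mem_biUnion.mpr ⟨u + v, ?_, ?_⟩
      · rw [hB0fin.mem_toFinset]
        exact ⟨Set.add_mem_add hu hv, hT⟩
      · rw [Finset.mem_antidiagonal]
        exact ⟨hu, hv, rfl⟩
    · intro p hne
      have hmem := hgA p hne
      rw [Finset.mem_product]
      exact ⟨(hPmem (show (p.1, p.2) ∈ A from hmem)).1, (hPmem (show (p.1, p.2) ∈ A from hmem)).2⟩
  -- Step 2 : the right-hand side
  have hDy : ∀ u ∈ P, (D y).coeff (γ - u) = ∑ v ∈ Q, y.coeff v * tderivCoeff ψ v (γ - u) :=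
    fun u hu => D_coeff_sum hD y (γ - u) Q (fun β hβ => (hPmem (hmemA2 (hPsupp u hu) hβ)).2)
  have hDx : ∀ v ∈ Q, (D x).coeff (γ - v) = ∑ u ∈ P, x.coeff u * tderivCoeff ψ u (γ - v) :=
    fun v hv => D_coeff_sum hD x (γ - v) P (fun α hα => (hPmem (hmemA1 (hQsupp v hv) hα)).1)
  have hXDy : (x * D y).coeff γ = ∑ u ∈ P, x.coeff u * (D y).coeff (γ - u) := by
    refine hs_mul_coeff_sum (fun u hu hz => ?_)
    have hex : ∃ β, y.coeff β * tderivCoeff ψ β (γ - u) ≠ 0 := by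
      by_contra hall
      push_neg at hall
      exact hz (by rw [hD]; exact finsum_eq_zero_of_forall_eq_zero hall)
    obtain ⟨β, hβ⟩ := hex
    exact (hPmem (hmemA2 hu hβ)).1
  have hYDx : (y * D x).coeff γ = ∑ v ∈ Q, y.coeff v * (D x).coeff (γ - v) := by
    refine hs_mul_coeff_sum (fun v hv hz => ?_)
    have hex : ∃ α, x.coeff α * tderivCoeff ψ α (γ - v) ≠ 0 := by
      by_contra hall
      push_neg at hall
      exact hz (by rw [hD]; exact finsum_eq_zero_of_forall_eq_zero hall)
    obtain ⟨α, hα⟩ := hex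
    exact (hPmem (hmemA1 hv hα)).2
  -- Step 3 : assemble
  rw [HahnSeries.coeff_add, hXDy, hYDx, step1, Finset.sum_product]
  have hsplit : ∀ u ∈ P, ∀ v ∈ Q,
      x.coeff u * y.coeff v * tderivCoeff ψ (u + v) γ =
      x.coeff u * (y.coeff v * tderivCoeff ψ v (γ - u)) +
      y.coeff v * (x.coeff u * tderivCoeff ψ u (γ - v)) := by
    intro u _ v _
    rw [tderivCoeff_add hψ u v γ]
    ring
  calc ∑ u ∈ P, ∑ v ∈ Q, x.coeff u * y.coeff v * tderivCoeff ψ (u + v) γ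
      = ∑ u ∈ P, ∑ v ∈ Q, (x.coeff u * (y.coeff v * tderivCoeff ψ v (γ - u)) +
          y.coeff v * (x.coeff u * tderivCoeff ψ u (γ - v))) :=
        Finset.sum_congr rfl (fun u hu => Finset.sum_congr rfl (fun v hv => hsplit u hu v hv))
    _ = ∑ u ∈ P, (∑ v ∈ Q, x.coeff u * (y.coeff v * tderivCoeff ψ v (γ - u)) +
          ∑ v ∈ Q, y.coeff v * (x.coeff u * tderivCoeff ψ u (γ - v))) :=
        Finset.sum_congr rfl (fun u hu => Finset.sum_add_distrib)
    _ = ∑ u ∈ P, ∑ v ∈ Q, x.coeff u * (y.coeff v * tderivCoeff ψ v (γ - u)) +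
          ∑ u ∈ P, ∑ v ∈ Q, y.coeff v * (x.coeff u * tderivCoeff ψ u (γ - v)) :=
        Finset.sum_add_distrib
    _ = ∑ u ∈ P, x.coeff u * (D y).coeff (γ - u) +
          ∑ v ∈ Q, y.coeff v * (D x).coeff (γ - v) := by
        congr 1
        · refine Finset.sum_congr rfl (fun u hu => ?_)
          rw [← Finset.mul_sum, hDy u hu]
        · rw [Finset.sum_comm]
          refine Finset.sum_congr rfl (fun v hv => ?_)
          rw [← Finset.mul_sum, hDx v hv]

end Leibniz
section Klevel

-- here the lemmas of the first sections are applied with `I := HahnSeries I k`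

lemma leadCoeff_coeff_order {x : HahnSeries (HahnSeries I k) k} (hx : x ≠ 0) :
    leadCoeff x = x.coeff x.order := by
  rw [HahnSeries.order_of_ne hx, leadCoeff, dif_neg hx]

lemma leadCoeff_eq_leadingCoeff (x : HahnSeries (HahnSeries I k) k) :
    leadCoeff x = x.leadingCoeff := by
  by_cases hx : x = 0
  · rw [hx, leadCoeff_zero, HahnSeries.leadingCoeff_zero]
  · rw [leadCoeff, dif_neg hx, HahnSeries.leadingCoeff_eq, HahnSeries.order_of_ne hx]

lemma K_mul_pos (a b : HahnSeries (HahnSeries I k) k) (ha : 0 < a) (hb : 0 < b) : 0 < a * b := by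
  have ha0 : a ≠ 0 := ne_of_gt ha
  have hb0 : b ≠ 0 := ne_of_gt hb
  have hab : a * b ≠ 0 := mul_ne_zero ha0 hb0
  rw [hs_pos_iff, leadCoeff_coeff_order hab, HahnSeries.order_mul ha0 hb0,
    HahnSeries.coeff_mul_order_add_order, ← leadCoeff_eq_leadingCoeff,
    ← leadCoeff_eq_leadingCoeff]
  exact mul_pos (hs_pos_iff.mp ha) (hs_pos_iff.mp hb)

lemma leadCoeff_C (c : k) : leadCoeff (HahnSeries.C c : HahnSeries (HahnSeries I k) k) = c := by
  rw [leadCoeff_eq_leadingCoeff, HahnSeries.C_apply, HahnSeries.leadingCoeff_of_single]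

lemma C_pos {c : k} (hc : 0 < c) : 0 < (HahnSeries.C c : HahnSeries (HahnSeries I k) k) := by
  rw [hs_pos_iff, leadCoeff_C]; exact hc

/-- any element with nonnegative order is bounded by a constant. -/
lemma le_C_of_order_nonneg {x : HahnSeries (HahnSeries I k) k} (hx : x ≠ 0) (ho : 0 ≤ x.order) :
    x ≤ HahnSeries.C (x.coeff 0 + 1) := by
  refine le_of_lt (hs_lt_iff.mpr ?_)
  have hc : (HahnSeries.C (x.coeff 0 + 1) - x).coeff 0 = 1 := by
    rw [HahnSeries.coeff_sub, HahnSeries.C_apply, HahnSeries.coeff_single_same]; ring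
  have hmin : ∀ γ', (HahnSeries.C (x.coeff 0 + 1) - x).coeff γ' ≠ 0 → (0:HahnSeries I k) ≤ γ' := by
    intro γ' hγ'
    rw [HahnSeries.coeff_sub, HahnSeries.C_apply, HahnSeries.coeff_single] at hγ'
    by_cases h1 : γ' = 0
    · exact le_of_eq h1.symm
    · rw [if_neg h1, zero_sub, neg_ne_zero] at hγ'
      exact le_trans ho (HahnSeries.order_le_of_coeff_ne_zero hγ')
  rw [leadCoeff_eq (show _ ≠ (0:k) by rw [hc]; norm_num) hmin, hc]
  norm_num

/-- any constant is below an element with negative order and positive lead. -/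
lemma C_lt_of_order_neg {x : HahnSeries (HahnSeries I k) k} (hx : 0 < x) (ho : x.order < 0)
    (c : k) : HahnSeries.C c < x := by
  have hx0 : x ≠ 0 := ne_of_gt hx
  refine hs_lt_iff.mpr ?_
  have hc : (x - HahnSeries.C c).coeff x.order = leadCoeff x := by
    rw [HahnSeries.coeff_sub, HahnSeries.C_apply, HahnSeries.coeff_single_of_ne (ne_of_lt ho),
      sub_zero, leadCoeff_coeff_order hx0]
  have hmin : ∀ γ', (x - HahnSeries.C c).coeff γ' ≠ 0 → x.order ≤ γ' := by
    intro γ' hγ'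
    rw [HahnSeries.coeff_sub, HahnSeries.C_apply, HahnSeries.coeff_single] at hγ'
    by_cases h1 : γ' = 0
    · rw [h1]; exact ho.le
    · rw [if_neg h1, sub_zero] at hγ'
      exact HahnSeries.order_le_of_coeff_ne_zero hγ'
  rw [leadCoeff_eq (show _ ≠ (0:k) by rw [hc]; exact ne_of_gt (hs_pos_iff.mp hx)) hmin, hc]
  exact hs_pos_iff.mp hx

/-- any element with positive order is below any positive constant. -/
lemma lt_C_of_order_pos {x : HahnSeries (HahnSeries I k) k} (hx : x = 0 ∨ 0 < x.order)
    {c : k} (hc : 0 < c) : x < HahnSeries.C c := by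
  refine hs_lt_iff.mpr ?_
  have hx0 : x.coeff 0 = 0 := by
    rcases hx with rfl | hx
    · simp
    · by_contra h0
      exact absurd (HahnSeries.order_le_of_coeff_ne_zero h0) (not_le.mpr hx)
  have hc0 : (HahnSeries.C c - x).coeff 0 = c := by
    rw [HahnSeries.coeff_sub, HahnSeries.C_apply, HahnSeries.coeff_single_same, hx0, sub_zero]
  have hmin : ∀ γ', (HahnSeries.C c - x).coeff γ' ≠ 0 → (0:HahnSeries I k) ≤ γ' := by
    intro γ' hγ'
    rw [HahnSeries.coeff_sub, HahnSeries.C_apply, HahnSeries.coeff_single] at hγ'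
    by_cases h1 : γ' = 0
    · exact le_of_eq h1.symm
    · rw [if_neg h1, zero_sub, neg_ne_zero] at hγ'
      rcases hx with rfl | hx
      · simp at hγ'
      · exact le_trans hx.le (HahnSeries.order_le_of_coeff_ne_zero hγ')
  rw [leadCoeff_eq (show _ ≠ (0:k) by rw [hc0]; exact ne_of_gt hc) hmin, hc0]
  exact hc

lemma order_abs (x : HahnSeries (HahnSeries I k) k) : |x|.order = x.order := by
  rcases abs_choice x with h | h
  · rw [h]
  · rw [h, HahnSeries.order_neg]

lemma not_lt_C_half_lead {x : HahnSeries (HahnSeries I k) k} (hx : x ≠ 0) (ho : x.order = 0) :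
    ¬ (|x| < HahnSeries.C (leadCoeff |x| / 2)) := by
  have habs : |x| ≠ 0 := abs_ne_zero.mpr hx
  have habspos : 0 < |x| := abs_pos.mpr hx
  have hlead : 0 < leadCoeff |x| := hs_pos_iff.mp habspos
  intro hlt
  rw [hs_lt_iff] at hlt
  have hoabs : |x|.order = 0 := by rw [order_abs, ho]
  have hc0 : (HahnSeries.C (leadCoeff |x| / 2) - |x|).coeff 0 = -(leadCoeff |x| / 2) := by
    rw [HahnSeries.coeff_sub, HahnSeries.C_apply, HahnSeries.coeff_single_same]
    have : |x|.coeff 0 = leadCoeff |x| := by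
      rw [← hoabs, ← leadCoeff_coeff_order habs]
    rw [this]; ring
  have hmin : ∀ γ', (HahnSeries.C (leadCoeff |x| / 2) - |x|).coeff γ' ≠ 0 →
      (0:HahnSeries I k) ≤ γ' := by
    intro γ' hγ'
    rw [HahnSeries.coeff_sub, HahnSeries.C_apply, HahnSeries.coeff_single] at hγ'
    by_cases h1 : γ' = 0
    · exact le_of_eq h1.symm
    · rw [if_neg h1, zero_sub, neg_ne_zero] at hγ'
      rw [← hoabs]
      exact HahnSeries.order_le_of_coeff_ne_zero hγ'
  rw [leadCoeff_eq (show _ ≠ (0:k) by rw [hc0, neg_ne_zero]; positivity) hmin, hc0] at hlt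
  nlinarith

lemma abs_C (a : k) : |(HahnSeries.C a : HahnSeries (HahnSeries I k) k)| = HahnSeries.C |a| := by
  rcases le_or_gt 0 a with h | h
  · have h0 : (0:HahnSeries (HahnSeries I k) k) ≤ HahnSeries.C a := by
      rcases eq_or_lt_of_le h with rfl | h'
      · rw [HahnSeries.C_zero]
      · exact (C_pos h').le
    rw [abs_of_nonneg h0, abs_of_nonneg h]
  · have h0 : (HahnSeries.C a : HahnSeries (HahnSeries I k) k) < 0 := by
      have h1 : (0:HahnSeries (HahnSeries I k) k) < HahnSeries.C (-a) :=
        C_pos (show (0:k) < -a by linarith)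
      rw [RingHom.map_neg] at h1
      exact neg_pos.mp h1
    rw [abs_of_neg h0, abs_of_neg h, RingHom.map_neg]

end Klevel
section Final

variable {ψ : HahnSeries I k → HahnSeries I k} (hψ : IsHCoupleHahnType ψ)
variable {D : HahnSeries (HahnSeries I k) k → HahnSeries (HahnSeries I k) k}
variable (hD : ∀ (f : HahnSeries (HahnSeries I k) k) (γ : HahnSeries I k),
      (D f).coeff γ = ∑ᶠ α : HahnSeries I k, f.coeff α * tderivCoeff ψ α γ)

include hψ hD

lemma D_const_iff (f : HahnSeries (HahnSeries I k) k) :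
    D f = 0 ↔ ∃ c : k, f = HahnSeries.C c := by
  constructor
  · intro h
    refine ⟨f.coeff 0, ?_⟩
    by_contra hne
    have hg : f - HahnSeries.C (f.coeff 0) ≠ 0 := sub_ne_zero.mpr hne
    have hg0 : (f - HahnSeries.C (f.coeff 0)).coeff 0 = 0 := by
      rw [HahnSeries.coeff_sub, HahnSeries.C_apply, HahnSeries.coeff_single_same, sub_self]
    have hgo : (f - HahnSeries.C (f.coeff 0)).order ≠ 0 := by
      intro h0
      apply (HahnSeries.coeff_order_eq_zero.not.mpr hg)
      rw [h0]; exact hg0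
    obtain ⟨hDne, -, -⟩ := D_leading hψ hD hg hgo
    refine hDne ?_
    rw [D_sub hψ hD, h, D_C hD, sub_zero]
  · rintro ⟨c, rfl⟩; exact D_C hD c

lemma D_h1 (h : HahnSeries (HahnSeries I k) k)
    (hc : ∀ c : HahnSeries (HahnSeries I k) k, D c = 0 → c < h) : 0 < D h := by
  have hpos : 0 < h := hc 0 (D_zero' hD)
  have hne : h ≠ 0 := ne_of_gt hpos
  have hneg : h.order < 0 := by
    by_contra hge
    push_neg at hge
    exact absurd (hc _ (D_C hD (h.coeff 0 + 1))) (not_lt.mpr (le_C_of_order_nonneg hne hge))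
  obtain ⟨hDne, hord, hcoeff⟩ := D_leading hψ hD hne (ne_of_lt hneg)
  rw [hs_pos_iff, leadCoeff_coeff_order hDne, hord, hcoeff]
  have h1 : 0 < h.coeff h.order := by
    rw [← leadCoeff_coeff_order hne]; exact hs_pos_iff.mp hpos
  have h2 : (h.order).coeff (leadIdx h.order (ne_of_lt hneg)) < 0 := by
    have h3 : (0:HahnSeries I k) < -h.order := neg_pos.mpr hneg
    have h4 := hs_pos_iff.mp h3
    rw [leadCoeff_neg] at h4
    rw [leadIdx_coeff]
    linarith
  nlinarith

omit hψ hD in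
lemma K_in_O_iff (x : HahnSeries (HahnSeries I k) k) :
    (∃ c : k, |x| ≤ HahnSeries.C c) ↔ (x = 0 ∨ 0 ≤ x.order) := by
  constructor
  · rintro ⟨c, hc⟩
    by_cases hx : x = 0
    · exact Or.inl hx
    right
    by_contra hlt
    push_neg at hlt
    have habs : 0 < |x| := abs_pos.mpr hx
    have hCx := C_lt_of_order_neg habs (by rw [order_abs]; exact hlt) c
    exact absurd hc (not_le.mpr hCx)
  · rintro (rfl | ho)
    · exact ⟨0, by rw [abs_zero, HahnSeries.C_zero]⟩
    by_cases hx : x = 0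
    · exact ⟨0, by rw [hx, abs_zero, HahnSeries.C_zero]⟩
    · exact ⟨|x|.coeff 0 + 1,
        le_C_of_order_nonneg (abs_ne_zero.mpr hx) (by rw [order_abs]; exact ho)⟩

omit hψ hD in
lemma K_small_iff (x : HahnSeries (HahnSeries I k) k) :
    (∀ c : k, 0 < c → |x| < HahnSeries.C c) ↔ (x = 0 ∨ 0 < x.order) := by
  constructor
  · intro hsm
    by_cases hx : x = 0
    · exact Or.inl hx
    right
    rcases lt_trichotomy x.order 0 with h | h | h
    · exfalso
      have hCx := C_lt_of_order_neg (abs_pos.mpr hx) (by rw [order_abs]; exact h) 1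
      exact lt_asymm hCx (hsm 1 one_pos)
    · exfalso
      have hl : 0 < leadCoeff |x| := hs_pos_iff.mp (abs_pos.mpr hx)
      exact not_lt_C_half_lead hx h (hsm (leadCoeff |x| / 2) (by positivity))
    · exact h
  · rintro (rfl | ho) c hc
    · rw [abs_zero]; exact C_pos hc
    · exact lt_C_of_order_pos (Or.inr (by rw [order_abs]; exact ho)) hc

lemma D_h2 (x : HahnSeries (HahnSeries I k) k) :
    (∃ c, D c = 0 ∧ |x| ≤ c) ↔
    ∃ c e : HahnSeries (HahnSeries I k) k, D c = 0 ∧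
      (∀ c' : HahnSeries (HahnSeries I k) k, D c' = 0 → 0 < c' → |e| < c') ∧ x = c + e := by
  constructor
  · rintro ⟨c, hDc, hxc⟩
    obtain ⟨a, rfl⟩ := (D_const_iff hψ hD c).mp hDc
    have hx0 : x = 0 ∨ 0 ≤ x.order := (K_in_O_iff x).mp ⟨a, hxc⟩
    refine ⟨HahnSeries.C (x.coeff 0), x - HahnSeries.C (x.coeff 0), D_C hD _, ?_,
      (add_sub_cancel _ _).symm⟩
    intro c' hDc' hc'pos
    obtain ⟨a', rfl⟩ := (D_const_iff hψ hD c').mp hDc'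
    have ha' : 0 < a' := by
      have := hs_pos_iff.mp hc'pos; rwa [leadCoeff_C] at this
    refine (K_small_iff _).mpr ?_ a' ha'
    by_cases he : x - HahnSeries.C (x.coeff 0) = 0
    · exact Or.inl he
    right
    rcases hx0 with rfl | ho
    · exfalso
      refine he ?_
      rw [HahnSeries.coeff_zero, HahnSeries.C_zero, sub_zero]
    have he0 : (x - HahnSeries.C (x.coeff 0)).coeff 0 = 0 := by
      rw [HahnSeries.coeff_sub, HahnSeries.C_apply, HahnSeries.coeff_single_same, sub_self]
    have hnonneg : ∀ γ', (x - HahnSeries.C (x.coeff 0)).coeff γ' ≠ 0 → (0:HahnSeries I k) ≤ γ' := by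
      intro γ' hγ'
      by_cases h1 : γ' = 0
      · exact le_of_eq h1.symm
      · rw [HahnSeries.coeff_sub, HahnSeries.C_apply, HahnSeries.coeff_single_of_ne h1,
          sub_zero] at hγ'
        exact le_trans ho (HahnSeries.order_le_of_coeff_ne_zero hγ')
    have hogen : 0 ≤ (x - HahnSeries.C (x.coeff 0)).order :=
      hnonneg _ ((HahnSeries.coeff_order_eq_zero.not.mpr he))
    refine lt_of_le_of_ne hogen ?_
    intro h0
    exact (HahnSeries.coeff_order_eq_zero.not.mpr he) (by rw [← h0]; exact he0)
  · rintro ⟨c, e, hDc, hsm, rfl⟩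
    obtain ⟨a, rfl⟩ := (D_const_iff hψ hD c).mp hDc
    refine ⟨HahnSeries.C (|a| + 1), D_C hD _, ?_⟩
    calc |HahnSeries.C a + e| ≤ |HahnSeries.C a| + |e| := abs_add_le _ _
      _ ≤ HahnSeries.C |a| + HahnSeries.C 1 :=
          add_le_add (le_of_eq (abs_C a))
            (le_of_lt (hsm (HahnSeries.C 1) (D_C hD 1) (C_pos one_pos)))
      _ = HahnSeries.C (|a| + 1) := by rw [← RingHom.map_add]

end Final

/-- Let `(Γ, ψ)`, `Γ := H[I,k]`, be an H-couple over `k` of Hahn type, and let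
`D : f ↦ f'` be the derivation of `K := k((t^Γ))` determined by
`(t^α)' = -∑_{i ∈ supp α} α_i t^{α + ψ(e_i)}` and strong additivity (pinned down here by its
coefficient formula).  Order `K` by `f > 0` iff the leading coefficient of `f` is positive.
Then `K` with this derivation is an H-field with constant field `k`, with valuation ring the
convex hull of `k` in `K`, and with asymptotic couple `(Γ, ψ)`:  `v (f'/f) = ψ (v f)` for all
nonzero `f` with `v f ≠ 0` (where `v f = f.order` is the minimum of the support of `f`). -/
theorem hahnField_isHField (ψ : HahnSeries I k → HahnSeries I k)
    (hψ : IsHCoupleHahnType ψ)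
    (D : HahnSeries (HahnSeries I k) k → HahnSeries (HahnSeries I k) k)
    (hD : ∀ (f : HahnSeries (HahnSeries I k) k) (γ : HahnSeries I k),
      (D f).coeff γ = ∑ᶠ α : HahnSeries I k, f.coeff α * tderivCoeff ψ α γ) :
    IsHField (HahnSeries (HahnSeries I k) k) D ∧
    -- the constant field of `K` is `k`:
    (∀ f : HahnSeries (HahnSeries I k) k, D f = 0 ↔ ∃ c : k, f = HahnSeries.C c) ∧
    -- the valuation ring of `K` is the convex hull of `k` in `K`:
    ({f : HahnSeries (HahnSeries I k) k | ∃ c, D c = 0 ∧ |f| ≤ c} =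
      {f : HahnSeries (HahnSeries I k) k | ∃ c : k, |f| ≤ HahnSeries.C c}) ∧
    -- the asymptotic couple of `K` is `(Γ, ψ)`:
    (∀ f : HahnSeries (HahnSeries I k) k, f ≠ 0 → f.order ≠ 0 →
      D f / f ≠ 0 ∧ (D f / f).order = ψ f.order) := by
  refine ⟨⟨fun a b hab c => add_le_add_right hab c, K_mul_pos, D_add hψ hD, D_mul hψ hD,
    D_h1 hψ hD, D_h2 hψ hD⟩, D_const_iff hψ hD, ?_, ?_⟩
  · ext x
    simp only [Set.mem_setOf_eq]
    constructor
    · rintro ⟨c, hDc, hle⟩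
      obtain ⟨a, rfl⟩ := (D_const_iff hψ hD c).mp hDc
      exact ⟨a, hle⟩
    · rintro ⟨a, hle⟩
      exact ⟨HahnSeries.C a, D_C hD a, hle⟩
  · intro f hf hfo
    obtain ⟨hDne, hord, -⟩ := D_leading hψ hD hf hfo
    have hq : D f / f ≠ 0 := div_ne_zero hDne hf
    refine ⟨hq, ?_⟩
    have hmul : D f / f * f = D f := div_mul_cancel₀ _ hf
    have horder := HahnSeries.order_mul hq hf
    rw [hmul, hord] at horder
    rw [add_comm (D f / f).order f.order] at horder
    exact (add_left_cancel horder).symm
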